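/- arXiv:1505.01351 — 2 statements merged into one kernel-verified Lean document; each statement's English description precedes it below -/
import Mathlib

section
/- The McDonald Gompertz density f(y; a,b,c,θ,γ) = (cθ e^{γy}/B(a/c,b)) · exp(-(θ/γ)(e^{γy}-1)) · [1 - exp(-(θ/γ)(e^{γy}-1))]^{a-1} · {1 - [1 - exp(-(θ/γ)(e^{γy}-1))]^c}^{b-1} is the derivative of the cdf F(y; a,b,c,θ,γ) = I(G(y)^c; a/c, b) at every y > 0. -/
open Real Filter Set MeasureTheory

noncomputable def incBeta (p q x : ℝ) : ℝ :=
  ∫ w in (0:ℝ)..x, w ^ (p - 1) * (1 - w) ^ (q - 1)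

noncomputable def regIncBeta (p q x : ℝ) : ℝ :=
  incBeta p q x / incBeta p q 1

noncomputable def gompertzCDF (θ γ y : ℝ) : ℝ :=
  1 - Real.exp (-(θ / γ) * (Real.exp (γ * y) - 1))

noncomputable def mcgCDF (a b c θ γ y : ℝ) : ℝ :=
  regIncBeta (a / c) b ((gompertzCDF θ γ y) ^ c)

noncomputable def mcgPDF (a b c θ γ y : ℝ) : ℝ :=
  c * θ * Real.exp (γ * y) / incBeta (a / c) b 1 *
    Real.exp (-(θ / γ) * (Real.exp (γ * y) - 1)) *
    (1 - Real.exp (-(θ / γ) * (Real.exp (γ * y) - 1))) ^ (a - 1) *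
    (1 - (1 - Real.exp (-(θ / γ) * (Real.exp (γ * y) - 1))) ^ c) ^ (b - 1)

/-! The cdf is `I(·; a/c, b) ∘ (G ^ c)` with `G` the Gompertz cdf, so the chain rule and the
fundamental theorem of calculus for the incomplete beta integral give its derivative; the only
algebra is `(G ^ c) ^ (a/c - 1) * G ^ (c - 1) = G ^ (a - 1)`. -/

theorem hasDerivAt_incBeta {p q x : ℝ} (hp : 0 < p) (hx : x ∈ Ioo (0 : ℝ) 1) :
    HasDerivAt (incBeta p q) (x ^ (p - 1) * (1 - x) ^ (q - 1)) x := by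
  obtain ⟨hx0, hx1⟩ := hx
  have hint : IntervalIntegrable (fun w : ℝ => w ^ (p - 1) * (1 - w) ^ (q - 1)) volume 0 x := by
    refine (intervalIntegral.intervalIntegrable_rpow' (by linarith)).mul_continuousOn ?_
    refine (continuous_const.sub continuous_id).continuousOn.rpow_const fun w hw => Or.inl ?_
    rw [uIcc_of_le hx0.le] at hw
    exact (sub_pos.2 (hw.2.trans_lt hx1)).ne'
  have hcont : ContinuousAt (fun w : ℝ => w ^ (p - 1) * (1 - w) ^ (q - 1)) x :=
    (continuousAt_rpow_const _ _ (Or.inl hx0.ne')).mul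
      ((continuous_const.sub continuous_id).continuousAt.rpow_const (Or.inl (sub_ne_zero.2 hx1.ne')))
  exact intervalIntegral.integral_hasDerivAt_right hint
    (Measurable.aestronglyMeasurable (by fun_prop)).stronglyMeasurableAtFilter hcont

theorem HasDerivAt.regIncBeta_rpow {g : ℝ → ℝ} {g' a c q y : ℝ} (hg : HasDerivAt g g' y)
    (hgy : g y ∈ Ioo (0 : ℝ) 1) (ha : 0 < a) (hc : 0 < c) :
    HasDerivAt (fun t => regIncBeta (a / c) q (g t ^ c))
      (c * g' / incBeta (a / c) q 1 * g y ^ (a - 1) * (1 - g y ^ c) ^ (q - 1)) y := by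
  obtain ⟨hg0, hg1⟩ := hgy
  have hgc : g y ^ c ∈ Ioo (0 : ℝ) 1 := ⟨rpow_pos_of_pos hg0 c, rpow_lt_one hg0.le hg1 hc⟩
  have hpow : (g y ^ c) ^ (a / c - 1) * g y ^ (c - 1) = g y ^ (a - 1) := by
    rw [← rpow_mul hg0.le, ← rpow_add hg0]
    congr 1
    field_simp
    ring
  have hderiv := ((hasDerivAt_incBeta (q := q) (div_pos ha hc) hgc).comp y
    (hg.rpow_const (p := c) (Or.inl hg0.ne'))).div_const (incBeta (a / c) q 1)
  refine hderiv.congr_deriv ?_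
  rw [← hpow]
  ring

theorem hasDerivAt_gompertzCDF {θ γ : ℝ} (hγ : γ ≠ 0) (y : ℝ) :
    HasDerivAt (gompertzCDF θ γ)
      (θ * exp (γ * y) * exp (-(θ / γ) * (exp (γ * y) - 1))) y := by
  have hexp := ((((hasDerivAt_id y).const_mul γ).exp.sub_const 1).const_mul (-(θ / γ))).exp
  refine ((hasDerivAt_const y (1 : ℝ)).sub hexp).congr_deriv ?_
  simp only [id]
  field_simp
  ring

theorem gompertzCDF_mem_Ioo {θ γ y : ℝ} (hθ : 0 < θ) (hγ : 0 < γ) (hy : 0 < y) :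
    gompertzCDF θ γ y ∈ Ioo (0 : ℝ) 1 := by
  have hexp : 0 < exp (γ * y) - 1 := sub_pos.2 (one_lt_exp_iff.2 (mul_pos hγ hy))
  have hneg : -(θ / γ) * (exp (γ * y) - 1) < 0 :=
    mul_neg_of_neg_of_pos (neg_neg_of_pos (div_pos hθ hγ)) hexp
  exact ⟨sub_pos.2 (exp_lt_one_iff.2 hneg), sub_lt_self _ (exp_pos _)⟩

theorem mcg_pdf_is_deriv_of_cdf_general (a b c θ γ : ℝ)
    (ha : 0 < a) (hc : 0 < c) (hθ : 0 < θ) (hγ : 0 < γ) :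
    ∀ y : ℝ, 0 < y →
      HasDerivAt (fun t => mcgCDF a b c θ γ t) (mcgPDF a b c θ γ y) y := by
  intro y hy
  refine ((hasDerivAt_gompertzCDF (θ := θ) hγ.ne' y).regIncBeta_rpow (q := b)
    (gompertzCDF_mem_Ioo hθ hγ hy) ha hc).congr_deriv ?_
  simp only [mcgPDF, gompertzCDF]
  ring

theorem mcg_pdf_is_deriv_of_cdf (a b c θ γ : ℝ)
    (ha : 0 < a) (hb : 0 < b) (hc : 0 < c) (hθ : 0 < θ) (hγ : 0 < γ) :
    ∀ y : ℝ, 0 < y →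
      HasDerivAt (fun t => mcgCDF a b c θ γ t) (mcgPDF a b c θ γ y) y :=
  mcg_pdf_is_deriv_of_cdf_general a b c θ γ ha hc hθ hγ
end

section
/- If 0 < a < 1, then lim_{y→0⁺} f(y; a,b,c,θ,γ) = +∞, where f is the McDonald Gompertz density with parameters a, b, c, θ, γ > 0. -/
open Real Filter Set MeasureTheory Topology

/-!
Write `G` for the Gompertz CDF. Since `1 - G = exp (-(θ / γ) * (exp (γ * y) - 1))`, the density
factors as `G ^ (a - 1)` times a cofactor that is continuous at `0` with the positive value
`c * θ / B (a / c, b)` there (using `G 0 = 0` and `c > 0`). As `y → 0⁺` we have `G y → 0⁺`, so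
`G ^ (a - 1) → ∞` because `a - 1 < 0`.
-/

lemma incBeta_one_eq_beta {p q : ℝ} (hp : 0 < p) (hq : 0 < q) :
    incBeta p q 1 = ProbabilityTheory.beta p q := by
  suffices h : Complex.betaIntegral p q = (incBeta p q 1 : ℂ) by
    rw [ProbabilityTheory.beta_eq_betaIntegralReal p q hp hq, h, Complex.ofReal_re]
  rw [Complex.betaIntegral, incBeta, ← intervalIntegral.integral_ofReal]
  refine intervalIntegral.integral_congr fun x hx => ?_
  rw [uIcc_of_le zero_le_one] at hx
  simp only [Complex.ofReal_mul, Complex.ofReal_cpow hx.1, Complex.ofReal_sub,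
    Complex.ofReal_cpow (sub_nonneg.2 hx.2), Complex.ofReal_one]

section Gompertz

variable {θ γ : ℝ}

lemma continuous_gompertzCDF (θ γ : ℝ) : Continuous (gompertzCDF θ γ) := by
  unfold gompertzCDF
  fun_prop

lemma gompertzCDF_zero (θ γ : ℝ) : gompertzCDF θ γ 0 = 0 := by
  simp [gompertzCDF]

lemma gompertzCDF_pos (hθ : 0 < θ) (hγ : 0 < γ) {y : ℝ} (hy : 0 < y) :
    0 < gompertzCDF θ γ y := by
  have hgrowth : 0 < exp (γ * y) - 1 := sub_pos.2 (one_lt_exp_iff.2 (mul_pos hγ hy))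
  exact sub_pos.2 <| exp_lt_one_iff.2 <| mul_neg_of_neg_of_pos (neg_neg_of_pos (div_pos hθ hγ)) hgrowth

lemma tendsto_gompertzCDF_nhdsGT_zero (hθ : 0 < θ) (hγ : 0 < γ) :
    Tendsto (gompertzCDF θ γ) (𝓝[>] 0) (𝓝[>] 0) := by
  refine tendsto_nhdsWithin_of_tendsto_nhds_of_eventually_within _ ?_
    (eventually_nhdsWithin_of_forall fun y hy => gompertzCDF_pos hθ hγ hy)
  simpa only [gompertzCDF_zero] using
    ((continuous_gompertzCDF θ γ).tendsto 0).mono_left nhdsWithin_le_nhds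

end Gompertz

lemma mcgPDF_eq (a b c θ γ y : ℝ) :
    mcgPDF a b c θ γ y =
      c * θ * exp (γ * y) / incBeta (a / c) b 1 * (1 - gompertzCDF θ γ y) *
        (1 - gompertzCDF θ γ y ^ c) ^ (b - 1) * gompertzCDF θ γ y ^ (a - 1) := by
  simp only [mcgPDF, gompertzCDF, sub_sub_cancel]
  ring

lemma tendsto_mcgPDF_cofactor (b θ γ k : ℝ) {c : ℝ} (hc : 0 < c) :
    Tendsto (fun y => c * θ * exp (γ * y) / k * (1 - gompertzCDF θ γ y) *
        (1 - gompertzCDF θ γ y ^ c) ^ (b - 1)) (𝓝 0) (𝓝 (c * θ / k)) := by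
  have hG := continuous_gompertzCDF θ γ
  have hGc : Continuous fun y => gompertzCDF θ γ y ^ c := hG.rpow_const fun _ => Or.inr hc.le
  have hcont : ContinuousAt (fun y => c * θ * exp (γ * y) / k * (1 - gompertzCDF θ γ y) *
      (1 - gompertzCDF θ γ y ^ c) ^ (b - 1)) 0 := by
    refine ContinuousAt.mul (by fun_prop) ((continuous_const.sub hGc).continuousAt.rpow_const ?_)
    left
    simp [gompertzCDF_zero, zero_rpow hc.ne']
  simpa [gompertzCDF_zero, zero_rpow hc.ne'] using hcont.tendsto

theorem mcg_pdf_limit_at_zero_a_lt_one (a b c θ γ : ℝ)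
    (ha0 : 0 < a) (ha1 : a < 1) (hb : 0 < b) (hc : 0 < c) (hθ : 0 < θ) (hγ : 0 < γ) :
    Tendsto (fun y => mcgPDF a b c θ γ y) (nhdsWithin 0 (Set.Ioi 0)) atTop := by
  have hB : 0 < incBeta (a / c) b 1 := by
    rw [incBeta_one_eq_beta (div_pos ha0 hc) hb]
    exact ProbabilityTheory.beta_pos (div_pos ha0 hc) hb
  have hpow : Tendsto (fun y => gompertzCDF θ γ y ^ (a - 1)) (𝓝[>] 0) atTop :=
    (tendsto_rpow_neg_nhdsGT_zero (sub_neg.2 ha1)).comp (tendsto_gompertzCDF_nhdsGT_zero hθ hγ)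
  simp_rw [mcgPDF_eq]
  exact ((tendsto_mcgPDF_cofactor b θ γ _ hc).mono_left nhdsWithin_le_nhds).pos_mul_atTop
    (div_pos (mul_pos hc hθ) hB) hpow
end
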